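/- arXiv:2006.14794 — 4 statements merged into one kernel-verified Lean document; each statement's English description precedes it below -/
import Mathlib

section
/- Let x, y : [0,T] → ℝ^d be continuously differentiable paths and let k(s,t) be the signature kernel (sum over all levels of inner products of iterated integrals). Then k satisfies the Volterra-type integral equation k(s,t) = 1 + ∫_0^s ∫_0^t k(p,q) ⟨ẋ_p, ẏ_q⟩ dq dp for all s, t in [0,T]. -/
open MeasureTheory Set

noncomputable section

/-- The open simplex { s < u₁ < ... < uₙ < t }. -/
def simplex (n : ℕ) (s t : ℝ) : Set (Fin n → ℝ) :=
  {u | (∀ i, u i ∈ Set.Ioo s t) ∧ ∀ i j : Fin n, i < j → u i < u j}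

/-- The n-th iterated integral (signature level) of the path x over [s,t],
as a tensor in (ℝ^d)^⊗n, modelled as a function (Fin n → Fin d) → ℝ. -/
def iterInt (d : ℕ) (x : ℝ → Fin d → ℝ) (n : ℕ) (s t : ℝ) :
    (Fin n → Fin d) → ℝ :=
  fun idx => ∫ u in simplex n s t, ∏ i, deriv x (u i) (idx i)

/-- The tensor-power inner product. -/
def tInner {ι : Type*} [Fintype ι] (a b : ι → ℝ) : ℝ := ∑ i, a i * b i

/-- The induced (Hilbert–Schmidt / Euclidean) norm. -/
def tNorm {ι : Type*} [Fintype ι] (a : ι → ℝ) : ℝ := Real.sqrt (tInner a a)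

/-- The signature kernel of paths x and y. -/
def sigKernel (d : ℕ) (x y : ℝ → Fin d → ℝ) (s t : ℝ) : ℝ :=
  ∑' n : ℕ, tInner (iterInt d x n 0 s) (iterInt d y n 0 t)

/-!
Write `Kₙ(s, t) = ⟨Xₙ(s), Yₙ(t)⟩`. Splitting off the last variable of the simplex (Fubini) gives
`X_{n+1}(s) = ∫₀ˢ Xₙ(p) ⊗ ẋ_p dp`, hence `K_{n+1}(s, t) = ∫₀ˢ ∫₀ᵗ Kₙ(p, q) ⟨ẋ_p, ẏ_q⟩ dq dp`
with `K₀ = 1`. On `[0, T]²` the bound `|Kₙ| ≤ (d ‖ẋ‖∞ ‖ẏ‖∞ T²)ⁿ / n!` dominates the series, so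
this recursion can be summed over `n` under both integrals.
-/

open scoped Nat

lemma measurableSet_simplex (n : ℕ) (a b : ℝ) : MeasurableSet (simplex n a b) := by
  simp only [simplex, ofPred_and, ofPred_forall]
  refine .inter (.iInter fun i => measurableSet_Ioo.preimage (measurable_pi_apply i))
    (.iInter fun i => .iInter fun j => .iInter fun _ => measurableSet_lt ?_ ?_) <;>
    fun_prop

lemma simplex_subset_pi_Icc (n : ℕ) (a b : ℝ) :
    simplex n a b ⊆ Set.pi univ fun _ => Icc a b :=
  fun _ hu i _ => Ioo_subset_Icc_self (hu.1 i)

lemma snoc_mem_simplex_iff {n : ℕ} {a b p : ℝ} {v : Fin n → ℝ} :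
    (Fin.snoc v p : Fin (n + 1) → ℝ) ∈ simplex (n + 1) a b ↔ p ∈ Ioo a b ∧ v ∈ simplex n a p := by
  simp only [simplex, mem_Ioo, Fin.forall_fin_succ', Fin.castSucc_lt_castSucc_iff,
    Fin.castSucc_lt_last, forall_const, (Fin.castSucc_lt_last _).not_gt, IsEmpty.forall_iff,
    implies_true, lt_self_iff_false, and_self, and_true, mem_ofPred_eq, Fin.snoc_castSucc,
    Fin.snoc_last]
  constructor
  · rintro ⟨⟨hv, hp⟩, hmono⟩
    exact ⟨hp, fun i => ⟨(hv i).1, (hmono i).2⟩, fun i => (hmono i).1⟩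
  · rintro ⟨hp, hv, hmono⟩
    exact ⟨⟨fun i => ⟨(hv i).1, (hv i).2.trans hp.2⟩, hp⟩, fun i => ⟨hmono i, (hv i).2⟩⟩

lemma simplex_zero (a b : ℝ) : simplex 0 a b = univ := by
  ext u; simp [simplex]

lemma integrableOn_simplex_of_continuous {E : Type*} [NormedAddCommGroup E] {n : ℕ}
    {f : (Fin n → ℝ) → E} (hf : Continuous f) (a b : ℝ) : IntegrableOn f (simplex n a b) :=
  (hf.continuousOn.integrableOn_compact (isCompact_univ_pi fun _ => isCompact_Icc)).mono_set
    (simplex_subset_pi_Icc n a b)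

theorem integral_simplex_succ {E : Type*} [NormedAddCommGroup E] [NormedSpace ℝ E] {n : ℕ}
    {a b : ℝ} {f : (Fin (n + 1) → ℝ) → E} (hf : IntegrableOn f (simplex (n + 1) a b)) :
    ∫ u in simplex (n + 1) a b, f u = ∫ p in Ioo a b, ∫ v in simplex n a p, f (Fin.snoc v p) := by
  set e := (MeasurableEquiv.piFinSuccAbove (fun _ : Fin (n + 1) => ℝ) (Fin.last n)).symm
  have he : ∀ z, e z = Fin.snoc z.2 z.1 := fun z => by
    simp [e, MeasurableEquiv.piFinSuccAbove_symm_apply, Fin.insertNthEquiv, Fin.insertNth_last']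
  have hmp : MeasurePreserving e :=
    (volume_preserving_piFinSuccAbove (fun _ : Fin (n + 1) => ℝ) (Fin.last n)).symm
  set S := e ⁻¹' simplex (n + 1) a b
  have hS : MeasurableSet S := e.measurable (measurableSet_simplex _ _ _)
  have hmem : ∀ p v, (p, v) ∈ S ↔ p ∈ Ioo a b ∧ v ∈ simplex n a p := fun p v => by
    rw [mem_preimage, he, snoc_mem_simplex_iff]
  have hint : Integrable (S.indicator (fun z => f (e z))) (volume.prod volume) := by
    rw [← Measure.volume_eq_prod, integrable_indicator_iff hS]
    exact hmp.integrableOn_comp_preimage e.measurableEmbedding |>.2 hf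
  have hslice : ∀ p, ∫ v, S.indicator (fun z => f (e z)) (p, v)
      = (Ioo a b).indicator (fun p => ∫ v in simplex n a p, f (Fin.snoc v p)) p := by
    intro p
    by_cases hp : p ∈ Ioo a b
    · rw [indicator_of_mem hp, ← integral_indicator (measurableSet_simplex n a p)]
      congr with v
      by_cases hv : v ∈ simplex n a p
      · rw [indicator_of_mem ((hmem p v).2 ⟨hp, hv⟩), indicator_of_mem hv, he]
      · rw [indicator_of_notMem (fun h => hv ((hmem p v).1 h).2), indicator_of_notMem hv]
    · rw [indicator_of_notMem hp]
      simp_rw [indicator_of_notMem (fun h => hp ((hmem p _).1 h).1), integral_zero]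
  rw [← hmp.setIntegral_preimage_emb e.measurableEmbedding, ← integral_indicator hS,
    Measure.volume_eq_prod, integral_prod _ hint]
  simp_rw [hslice]
  rw [integral_indicator measurableSet_Ioo]

section IteratedIntegral

variable {d : ℕ} {x : ℝ → Fin d → ℝ}

lemma iterInt_zero (a b : ℝ) (idx : Fin 0 → Fin d) : iterInt d x 0 a b idx = 1 := by
  simp [iterInt, simplex_zero, Measure.real, volume_pi]

lemma iterInt_succ (hx : Continuous (deriv x)) (n : ℕ) (a b : ℝ) (idx : Fin (n + 1) → Fin d) :
    iterInt d x (n + 1) a b idx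
      = ∫ p in Ioo a b, iterInt d x n a p (Fin.init idx) * deriv x p (idx (Fin.last n)) := by
  rw [iterInt, integral_simplex_succ (integrableOn_simplex_of_continuous (by fun_prop) a b)]
  refine setIntegral_congr_fun measurableSet_Ioo fun p _ => ?_
  simp only [Fin.prod_univ_castSucc, Fin.snoc_castSucc, Fin.snoc_last, iterInt, Fin.init]
  exact integral_mul_const _ _

end IteratedIntegral

/-- `iterInt d x n 0 s idx` written as a recursion on `n`, which makes it continuous in `s` on all
of `ℝ`; the two agree only for `0 ≤ s`. -/
def sigCoord (d : ℕ) (x : ℝ → Fin d → ℝ) : (n : ℕ) → (Fin n → Fin d) → ℝ → ℝ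
  | 0, _, _ => 1
  | n + 1, idx, s =>
      ∫ p in (0 : ℝ)..s, sigCoord d x n (Fin.init idx) p * deriv x p (idx (Fin.last n))

section SigCoord

variable {d : ℕ} {x : ℝ → Fin d → ℝ}

lemma continuous_sigCoord (hx : Continuous (deriv x)) :
    ∀ n (idx : Fin n → Fin d), Continuous (sigCoord d x n idx)
  | 0, _ => continuous_const
  | n + 1, idx =>
    intervalIntegral.continuous_primitive (fun _ _ =>
      ((continuous_sigCoord hx n _).mul (by fun_prop)).intervalIntegrable _ _) 0

lemma iterInt_eq_sigCoord (hx : Continuous (deriv x)) :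
    ∀ n (idx : Fin n → Fin d) {s : ℝ}, 0 ≤ s → iterInt d x n 0 s idx = sigCoord d x n idx s
  | 0, idx, _, _ => iterInt_zero 0 _ idx
  | n + 1, idx, s, hs => by
    rw [iterInt_succ hx, sigCoord, intervalIntegral.integral_of_le hs,
      integral_Ioc_eq_integral_Ioo]
    refine setIntegral_congr_fun measurableSet_Ioo fun p hp => ?_
    rw [iterInt_eq_sigCoord hx n _ hp.1.le]

lemma abs_sigCoord_le (hx : Continuous (deriv x)) {T M : ℝ}
    (hM : ∀ p ∈ Icc 0 T, ∀ i, |deriv x p i| ≤ M) :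
    ∀ n (idx : Fin n → Fin d) {s : ℝ}, s ∈ Icc 0 T → |sigCoord d x n idx s| ≤ M ^ n * s ^ n / n !
  | 0, idx, s, hs => by simp [sigCoord]
  | n + 1, idx, s, hs => by
    have hbound : ∀ p ∈ Icc 0 s,
        |sigCoord d x n (Fin.init idx) p * deriv x p (idx (Fin.last n))|
          ≤ M ^ (n + 1) / n ! * p ^ n := fun p hp => by
      have hpT : p ∈ Icc 0 T := ⟨hp.1, hp.2.trans hs.2⟩
      have hcoord := abs_sigCoord_le hx hM n (Fin.init idx) hpT
      rw [abs_mul]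
      calc _ ≤ M ^ n * p ^ n / n ! * M :=
            mul_le_mul hcoord (hM p hpT _) (abs_nonneg _) ((abs_nonneg _).trans hcoord)
        _ = _ := by ring
    calc |sigCoord d x (n + 1) idx s|
        ≤ ∫ p in (0 : ℝ)..s, |sigCoord d x n (Fin.init idx) p * deriv x p (idx (Fin.last n))| :=
          intervalIntegral.abs_integral_le_integral_abs hs.1
      _ ≤ ∫ p in (0 : ℝ)..s, M ^ (n + 1) / n ! * p ^ n :=
          intervalIntegral.integral_mono_on hs.1
            (((continuous_sigCoord hx n _).mul (by fun_prop)).abs.intervalIntegrable _ _)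
            ((continuous_const.mul (continuous_pow n)).intervalIntegrable _ _) hbound
      _ = M ^ (n + 1) * s ^ (n + 1) / (n + 1)! := by
          rw [intervalIntegral.integral_const_mul, integral_pow, Nat.factorial_succ]
          push_cast
          field_simp
          ring

end SigCoord

lemma sum_fin_succ_fun_eq_sum_init_last {ι M : Type*} [Fintype ι] [AddCommMonoid M] {n : ℕ}
    (F : (Fin n → ι) → ι → M) :
    ∑ idx : Fin (n + 1) → ι, F (Fin.init idx) (idx (Fin.last n)) = ∑ a, ∑ i, F a i := by
  rw [← (Fin.snocEquiv fun _ => ι).sum_comp, Fintype.sum_prod_type, Finset.sum_comm]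
  simp [Fin.snocEquiv]

lemma sum_integral_mul_integral {ι : Type*} (S : Finset ι) {f g : ι → ℝ → ℝ} {a b c d : ℝ}
    (hf : ∀ i, IntervalIntegrable (f i) volume a b)
    (hg : ∀ i, IntervalIntegrable (g i) volume c d) :
    ∑ i ∈ S, (∫ p in a..b, f i p) * (∫ q in c..d, g i q)
      = ∫ p in a..b, ∫ q in c..d, ∑ i ∈ S, f i p * g i q := by
  simp_rw [← intervalIntegral.integral_mul_const]
  rw [← intervalIntegral.integral_finsetSum fun i _ => (hf i).mul_const _]
  refine intervalIntegral.integral_congr fun p _ => ?_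
  simp_rw [← intervalIntegral.integral_const_mul]
  exact (intervalIntegral.integral_finsetSum fun i _ => (hg i).const_mul _).symm

lemma continuous_tInner {ι X : Type*} [Fintype ι] [TopologicalSpace X] {f g : X → ι → ℝ}
    (hf : Continuous f) (hg : Continuous g) : Continuous fun z => tInner (f z) (g z) := by
  unfold tInner
  fun_prop

def sigKernelTerm (d : ℕ) (x y : ℝ → Fin d → ℝ) (n : ℕ) (s t : ℝ) : ℝ :=
  ∑ idx : Fin n → Fin d, sigCoord d x n idx s * sigCoord d y n idx t

section SigKernelTerm

variable {d : ℕ} {x y : ℝ → Fin d → ℝ}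

lemma sigKernelTerm_zero (s t : ℝ) : sigKernelTerm d x y 0 s t = 1 := by
  simp [sigKernelTerm, sigCoord]

lemma sigKernelTerm_succ (hx : Continuous (deriv x)) (hy : Continuous (deriv y)) (n : ℕ)
    (s t : ℝ) :
    sigKernelTerm d x y (n + 1) s t
      = ∫ p in (0 : ℝ)..s, ∫ q in (0 : ℝ)..t,
          sigKernelTerm d x y n p q * tInner (deriv x p) (deriv y q) := by
  rw [sigKernelTerm]
  simp only [sigCoord]
  rw [sum_integral_mul_integral Finset.univ
    (f := fun (idx : Fin (n + 1) → Fin d) p =>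
      sigCoord d x n (Fin.init idx) p * deriv x p (idx (Fin.last n)))
    (g := fun (idx : Fin (n + 1) → Fin d) q =>
      sigCoord d y n (Fin.init idx) q * deriv y q (idx (Fin.last n)))
    (fun _ => ((continuous_sigCoord hx n _).mul (by fun_prop)).intervalIntegrable _ _)
    (fun _ => ((continuous_sigCoord hy n _).mul (by fun_prop)).intervalIntegrable _ _)]
  refine intervalIntegral.integral_congr fun p _ => intervalIntegral.integral_congr fun q _ => ?_
  rw [sum_fin_succ_fun_eq_sum_init_last
    (fun a i => sigCoord d x n a p * deriv x p i * (sigCoord d y n a q * deriv y q i)),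
    sigKernelTerm, tInner, Finset.sum_mul]
  simp_rw [Finset.mul_sum]
  exact Finset.sum_congr rfl fun a _ => Finset.sum_congr rfl fun i _ => by ring

lemma continuous_sigKernelTerm (hx : Continuous (deriv x)) (hy : Continuous (deriv y)) (n : ℕ) :
    Continuous (Function.uncurry (sigKernelTerm d x y n)) :=
  continuous_finsetSum _ fun idx _ =>
    ((continuous_sigCoord hx n idx).comp continuous_fst).mul
      ((continuous_sigCoord hy n idx).comp continuous_snd)

lemma abs_sigKernelTerm_le (hx : Continuous (deriv x)) (hy : Continuous (deriv y))
    {T Mx My : ℝ} (hMx₀ : 0 ≤ Mx) (hMy₀ : 0 ≤ My)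
    (hMx : ∀ p ∈ Icc 0 T, ∀ i, |deriv x p i| ≤ Mx) (hMy : ∀ q ∈ Icc 0 T, ∀ i, |deriv y q i| ≤ My)
    (n : ℕ) {p q : ℝ} (hp : p ∈ Icc 0 T) (hq : q ∈ Icc 0 T) :
    |sigKernelTerm d x y n p q| ≤ (d * Mx * My * T ^ 2) ^ n / n ! := by
  have hcoord : ∀ {z : ℝ → Fin d → ℝ} {M : ℝ}, Continuous (deriv z) → 0 ≤ M →
      (∀ p ∈ Icc 0 T, ∀ i, |deriv z p i| ≤ M) → ∀ idx, ∀ r ∈ Icc 0 T,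
        |sigCoord d z n idx r| ≤ M ^ n * T ^ n / n ! := fun hz hM₀ hM idx r hr =>
    (abs_sigCoord_le hz hM n idx hr).trans (by gcongr; exacts [hr.1, hr.2])
  calc |sigKernelTerm d x y n p q|
      ≤ ∑ idx : Fin n → Fin d, |sigCoord d x n idx p * sigCoord d y n idx q| :=
        Finset.abs_sum_le_sum_abs _ _
    _ ≤ ∑ _idx : Fin n → Fin d, Mx ^ n * T ^ n / n ! * (My ^ n * T ^ n / n !) :=
        Finset.sum_le_sum fun idx _ => by
          rw [abs_mul]
          have hxp := hcoord hx hMx₀ hMx idx p hp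
          exact mul_le_mul hxp (hcoord hy hMy₀ hMy idx q hq) (abs_nonneg _)
            ((abs_nonneg _).trans hxp)
    _ = (d * Mx * My * T ^ 2) ^ n / n ! / n ! := by
        simp only [Finset.sum_const, Finset.card_univ, Fintype.card_fun, Fintype.card_fin,
          nsmul_eq_mul, Nat.cast_pow]
        ring
    _ ≤ (d * Mx * My * T ^ 2) ^ n / n ! :=
        div_le_self (by positivity) (Nat.one_le_cast.2 n.factorial_pos)

lemma hasSum_sigKernelTerm (hx : Continuous (deriv x)) (hy : Continuous (deriv y))
    {T Mx My : ℝ} (hMx₀ : 0 ≤ Mx) (hMy₀ : 0 ≤ My)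
    (hMx : ∀ p ∈ Icc 0 T, ∀ i, |deriv x p i| ≤ Mx) (hMy : ∀ q ∈ Icc 0 T, ∀ i, |deriv y q i| ≤ My)
    {p q : ℝ} (hp : p ∈ Icc 0 T) (hq : q ∈ Icc 0 T) :
    HasSum (fun n => sigKernelTerm d x y n p q) (sigKernel d x y p q) := by
  have hsum : Summable fun n => sigKernelTerm d x y n p q :=
    .of_norm_bounded (Real.summable_pow_div_factorial _)
      fun n => abs_sigKernelTerm_le hx hy hMx₀ hMy₀ hMx hMy n hp hq
  convert hsum.hasSum using 1
  refine tsum_congr fun n => Finset.sum_congr rfl fun idx _ => ?_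
  rw [iterInt_eq_sigCoord hx n idx hp.1, iterInt_eq_sigCoord hy n idx hq.1]

end SigKernelTerm

lemma IsCompact.exists_nonneg_forall_abs_apply_le {X ι : Type*} [TopologicalSpace X] [Fintype ι]
    {K : Set X} (hK : IsCompact K) {f : X → ι → ℝ} (hf : ContinuousOn f K) :
    ∃ M, 0 ≤ M ∧ ∀ p ∈ K, ∀ i, |f p i| ≤ M := by
  obtain ⟨C, hC⟩ := hK.exists_bound_of_continuousOn hf
  exact ⟨max C 0, le_max_right _ _, fun p hp i =>
    ((norm_le_pi_norm (f p) i).trans (hC p hp)).trans (le_max_left _ _)⟩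

lemma hasSum_intervalIntegral_of_norm_le {E : Type*} [NormedAddCommGroup E] [NormedSpace ℝ E]
    {F : ℕ → ℝ → E} {f : ℝ → E} {B : ℕ → ℝ} {a b : ℝ}
    (hF : ∀ n, AEStronglyMeasurable (F n) (volume.restrict (uIoc a b)))
    (hFB : ∀ n, ∀ x ∈ uIoc a b, ‖F n x‖ ≤ B n) (hB : Summable B)
    (hf : ∀ x ∈ uIoc a b, HasSum (fun n => F n x) (f x)) :
    HasSum (fun n => ∫ x in a..b, F n x) (∫ x in a..b, f x) :=
  intervalIntegral.hasSum_integral_of_dominated_convergence (fun n _ => B n) hF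
    (fun n => ae_of_all _ (hFB n)) (ae_of_all _ fun _ _ => hB) intervalIntegrable_const
    (ae_of_all _ hf)

theorem eq_one_add_integral_integral_of_hasSum {K : ℕ → ℝ → ℝ → ℝ} {k g : ℝ → ℝ → ℝ}
    {B : ℕ → ℝ} {a b s t : ℝ} (hK : ∀ n, Continuous (Function.uncurry (K n)))
    (hg : Continuous (Function.uncurry g)) (hK_zero : K 0 s t = 1)
    (hK_succ : ∀ n, K (n + 1) s t = ∫ p in a..s, ∫ q in b..t, K n p q * g p q)
    (hB : Summable B) (hKB : ∀ n, ∀ p ∈ uIcc a s, ∀ q ∈ uIcc b t, |K n p q| ≤ B n)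
    (hk : ∀ p ∈ uIcc a s, ∀ q ∈ uIcc b t, HasSum (fun n => K n p q) (k p q)) :
    k s t = 1 + ∫ p in a..s, ∫ q in b..t, k p q * g p q := by
  obtain ⟨C, hC⟩ := (isCompact_uIcc.prod isCompact_uIcc).exists_bound_of_continuousOn
    (hg.continuousOn (s := uIcc a s ×ˢ uIcc b t))
  have hKg : ∀ n, ∀ p ∈ uIcc a s, ∀ q ∈ uIcc b t, ‖K n p q * g p q‖ ≤ B n * C :=
    fun n p hp q hq => by
      rw [norm_mul]
      exact mul_le_mul (hKB n p hp q hq) (hC (p, q) ⟨hp, hq⟩) (norm_nonneg _)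
        ((abs_nonneg _).trans (hKB n p hp q hq))
  have hinner : ∀ p ∈ uIcc a s,
      HasSum (fun n => ∫ q in b..t, K n p q * g p q) (∫ q in b..t, k p q * g p q) :=
    fun p hp => hasSum_intervalIntegral_of_norm_le
      (fun n => ((hK n).comp (.prodMk_right p)).mul (hg.comp (.prodMk_right p))
        |>.aestronglyMeasurable)
      (fun n q hq => hKg n p hp q (uIoc_subset_uIcc hq)) (hB.mul_right C)
      (fun q hq => (hk p hp q (uIoc_subset_uIcc hq)).mul_right _)
  have houter : HasSum (fun n => K (n + 1) s t) (∫ p in a..s, ∫ q in b..t, k p q * g p q) := by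
    simp_rw [hK_succ]
    exact hasSum_intervalIntegral_of_norm_le
      (fun n => (intervalIntegral.continuous_parametric_intervalIntegral_of_continuous'
        ((hK n).mul hg) b t).aestronglyMeasurable)
      (fun n p hp => intervalIntegral.norm_integral_le_of_norm_le_const
        fun q hq => hKg n p (uIoc_subset_uIcc hp) q (uIoc_subset_uIcc hq))
      ((hB.mul_right C).mul_right _) (fun p hp => hinner p (uIoc_subset_uIcc hp))
  have hst := (hasSum_nat_add_iff (f := fun n => K n s t) 1).1 houter
  rw [Finset.sum_range_one, hK_zero] at hst
  rw [(hk s right_mem_uIcc t right_mem_uIcc).unique hst, add_comm]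

/-- The signature kernel satisfies the Volterra-type integral equation
k(s,t) = 1 + ∫₀^s ∫₀^t k(p,q) ⟨ẋ_p, ẏ_q⟩ dq dp. -/
theorem stmt3 (d : ℕ) (T : ℝ) (x y : ℝ → Fin d → ℝ)
    (hx : ContDiff ℝ 1 x) (hy : ContDiff ℝ 1 y) :
    ∀ s ∈ Icc (0 : ℝ) T, ∀ t ∈ Icc (0 : ℝ) T,
      sigKernel d x y s t
        = 1 + ∫ p in (0 : ℝ)..s, ∫ q in (0 : ℝ)..t,
            sigKernel d x y p q * tInner (deriv x p) (deriv y q) := by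
  intro s hs t ht
  have hx' : Continuous (deriv x) := hx.continuous_deriv le_rfl
  have hy' : Continuous (deriv y) := hy.continuous_deriv le_rfl
  obtain ⟨Mx, hMx₀, hMx⟩ := isCompact_Icc.exists_nonneg_forall_abs_apply_le hx'.continuousOn
  obtain ⟨My, hMy₀, hMy⟩ := isCompact_Icc.exists_nonneg_forall_abs_apply_le hy'.continuousOn
  have hsub : ∀ {r}, r ∈ Icc 0 T → uIcc 0 r ⊆ Icc 0 T := fun hr => by
    rw [uIcc_of_le hr.1]
    exact Icc_subset_Icc_right hr.2
  exact eq_one_add_integral_integral_of_hasSum (continuous_sigKernelTerm hx' hy')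
    (continuous_tInner (hx'.comp continuous_fst) (hy'.comp continuous_snd))
    (sigKernelTerm_zero s t) (sigKernelTerm_succ hx' hy' · s t) (Real.summable_pow_div_factorial _)
    (fun n p hp q hq => abs_sigKernelTerm_le hx' hy' hMx₀ hMy₀ hMx hMy n (hsub hs hp) (hsub ht hq))
    (fun p hp q hq => hasSum_sigKernelTerm hx' hy' hMx₀ hMy₀ hMx hMy (hsub hs hp) (hsub ht hq))
end
end

section
/- Let f : ℝ² → ℝ be continuous on the rectangle D = [u,u']×[v,v'] and suppose k : D → ℝ is continuous and satisfies k(s,t) = 1 + ∫_u^s ∫_v^t k(p,q) f(p,q) dq dp for all (s,t) ∈ D. Then k is the unique continuous solution of this integral equation on D. -/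
open MeasureTheory Set

noncomputable section

/-- Uniqueness for the Goursat-type Volterra integral equation
k(s,t) = 1 + ∫_u^s ∫_v^t k f with continuous f: any two continuous solutions
on the rectangle agree. -/
theorem stmt9 (u u' v v' : ℝ) (f k₁ k₂ : ℝ → ℝ → ℝ)
    (hf : ContinuousOn (fun p : ℝ × ℝ => f p.1 p.2) (Icc u u' ×ˢ Icc v v'))
    (hk₁c : ContinuousOn (fun p : ℝ × ℝ => k₁ p.1 p.2) (Icc u u' ×ˢ Icc v v'))
    (hk₂c : ContinuousOn (fun p : ℝ × ℝ => k₂ p.1 p.2) (Icc u u' ×ˢ Icc v v'))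
    (hk₁ : ∀ s ∈ Icc u u', ∀ t ∈ Icc v v',
      k₁ s t = 1 + ∫ p in u..s, ∫ q in v..t, k₁ p q * f p q)
    (hk₂ : ∀ s ∈ Icc u u', ∀ t ∈ Icc v v',
      k₂ s t = 1 + ∫ p in u..s, ∫ q in v..t, k₂ p q * f p q) :
    ∀ s ∈ Icc u u', ∀ t ∈ Icc v v', k₁ s t = k₂ s t := by
  intro s hs t ht
  have hu : u ≤ u' := hs.1.trans hs.2
  have hv : v ≤ v' := ht.1.trans ht.2
  -- clamping maps
  set P : ℝ → ℝ := fun x => max u (min x u') with hPdef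
  set Q : ℝ → ℝ := fun y => max v (min y v') with hQdef
  have hPmem : ∀ x, P x ∈ Icc u u' :=
    fun x => ⟨le_max_left _ _, max_le hu (min_le_right x u')⟩
  have hQmem : ∀ y, Q y ∈ Icc v v' :=
    fun y => ⟨le_max_left _ _, max_le hv (min_le_right y v')⟩
  have hPeq : ∀ x ∈ Icc u u', P x = x := by
    intro x hx; simp only [hPdef]; rw [min_eq_left hx.2, max_eq_right hx.1]
  have hQeq : ∀ y ∈ Icc v v', Q y = y := by
    intro y hy; simp only [hQdef]; rw [min_eq_left hy.2, max_eq_right hy.1]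
  have hPcont : Continuous P := continuous_const.max (continuous_id.min continuous_const)
  have hQcont : Continuous Q := continuous_const.max (continuous_id.min continuous_const)
  have hccont : Continuous (fun z : ℝ × ℝ => ((P z.1, Q z.2) : ℝ × ℝ)) :=
    (hPcont.comp continuous_fst).prodMk (hQcont.comp continuous_snd)
  have hcmem : ∀ z : ℝ × ℝ, ((P z.1, Q z.2) : ℝ × ℝ) ∈ Icc u u' ×ˢ Icc v v' :=
    fun z => ⟨hPmem _, hQmem _⟩
  -- extended functions
  set F : ℝ × ℝ → ℝ := fun z => f (P z.1) (Q z.2) with hFdef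
  set g : ℝ × ℝ → ℝ := fun z => k₁ (P z.1) (Q z.2) - k₂ (P z.1) (Q z.2) with hgdef
  have hFcont : Continuous F := hf.comp_continuous hccont hcmem
  have hgcont : Continuous g :=
    (hk₁c.comp_continuous hccont hcmem).sub (hk₂c.comp_continuous hccont hcmem)
  -- bounds
  obtain ⟨M, hM⟩ := (isCompact_Icc.prod isCompact_Icc).exists_bound_of_continuousOn hf
  have hMF : ∀ z : ℝ × ℝ, |F z| ≤ M := fun z => hM _ (hcmem z)
  have hM0 : 0 ≤ M := (abs_nonneg _).trans (hMF (u, v))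
  obtain ⟨C, hC⟩ := (isCompact_Icc.prod isCompact_Icc).exists_bound_of_continuousOn
    (hk₁c.sub hk₂c)
  have hCg : ∀ z : ℝ × ℝ, |g z| ≤ C := fun z => hC _ (hcmem z)
  have hC0 : 0 ≤ C := (abs_nonneg _).trans (hCg (u, v))
  -- continuity of the uncurried integrand
  have hgF : Continuous (Function.uncurry fun p q => g (p, q) * F (p, q)) := by
    exact (hgcont.mul hFcont).comp (continuous_id)
  -- the integral equation for g
  have heq : ∀ s' ∈ Icc u u', ∀ t' ∈ Icc v v',
      g (s', t') = ∫ p in u..s', ∫ q in v..t', g (p, q) * F (p, q) := by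
    intro s' hs' t' ht'
    have e₁ : ∀ (k : ℝ → ℝ → ℝ), ContinuousOn (fun p : ℝ × ℝ => k p.1 p.2)
        (Icc u u' ×ˢ Icc v v') →
        (∫ p in u..s', ∫ q in v..t', k p q * f p q)
          = ∫ p in u..s', ∫ q in v..t', k (P p) (Q q) * F (p, q) := by
      intro k hk
      apply intervalIntegral.integral_congr
      intro p hp
      rw [uIcc_of_le hs'.1] at hp
      have hpmem : p ∈ Icc u u' := ⟨hp.1, hp.2.trans hs'.2⟩
      apply intervalIntegral.integral_congr
      intro q hq
      rw [uIcc_of_le ht'.1] at hq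
      have hqmem : q ∈ Icc v v' := ⟨hq.1, hq.2.trans ht'.2⟩
      simp only [hFdef, hPeq p hpmem, hQeq q hqmem]
    have hcont₁ : Continuous fun p : ℝ => ∫ q in v..t', k₁ (P p) (Q q) * F (p, q) := by
      apply intervalIntegral.continuous_parametric_intervalIntegral_of_continuous'
      exact ((hk₁c.comp_continuous hccont hcmem).mul hFcont)
    have hcont₂ : Continuous fun p : ℝ => ∫ q in v..t', k₂ (P p) (Q q) * F (p, q) := by
      apply intervalIntegral.continuous_parametric_intervalIntegral_of_continuous'
      exact ((hk₂c.comp_continuous hccont hcmem).mul hFcont)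
    have lhs : g (s', t') = k₁ s' t' - k₂ s' t' := by
      simp only [hgdef, hPeq s' hs', hQeq t' ht']
    rw [lhs, hk₁ s' hs' t' ht', hk₂ s' hs' t' ht', add_sub_add_left_eq_sub,
      e₁ k₁ hk₁c, e₁ k₂ hk₂c, ← intervalIntegral.integral_sub
        (hcont₁.intervalIntegrable u s') (hcont₂.intervalIntegrable u s')]
    apply intervalIntegral.integral_congr
    intro p _
    beta_reduce
    rw [← intervalIntegral.integral_sub]
    · apply intervalIntegral.integral_congr
      intro q _
      simp only [hgdef]
      ring
    · exact (((hk₁c.comp_continuous hccont hcmem).mul hFcont).comp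
        (Continuous.prodMk_right p)).intervalIntegrable v t'
    · exact (((hk₂c.comp_continuous hccont hcmem).mul hFcont).comp
        (Continuous.prodMk_right p)).intervalIntegrable v t'
  -- inner primitive is continuous in the parameter
  have hGcont : ∀ t' : ℝ, Continuous fun p : ℝ => ∫ q in v..t', g (p, q) * F (p, q) := by
    intro t'
    apply intervalIntegral.continuous_parametric_intervalIntegral_of_continuous'
    exact hgF
  -- the iterated bound
  have key : ∀ n : ℕ, ∀ s' ∈ Icc u u', ∀ t' ∈ Icc v v',
      |g (s', t')| ≤ C * M ^ n * (s' - u) ^ n * (t' - v) ^ n / (n.factorial : ℝ) ^ 2 := by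
    intro n
    induction n with
    | zero => intro s' _ t' _; simpa using hCg (s', t')
    | succ n ih =>
      intro s' hs' t' ht'
      have hfac : (0 : ℝ) < (n.factorial : ℝ) := by positivity
      have hn1 : (0 : ℝ) < (n : ℝ) + 1 := by positivity
      set D : ℝ := C * M ^ (n + 1) * (t' - v) ^ (n + 1) / ((n.factorial : ℝ) ^ 2 * ((n : ℝ) + 1))
        with hDdef
      have hpow : ∀ (a b : ℝ) (m : ℕ), (∫ x in a..b, (x - a) ^ m) = (b - a) ^ (m + 1) / (m + 1) := by
        intro a b m
        rw [intervalIntegral.integral_comp_sub_right (fun x => x ^ m) a]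
        simp [integral_pow]
      have hptwise : ∀ p ∈ Icc u s',
          |∫ q in v..t', g (p, q) * F (p, q)| ≤ D * (p - u) ^ n := by
        intro p hp
        have hpmem : p ∈ Icc u u' := ⟨hp.1, hp.2.trans hs'.2⟩
        set E : ℝ := C * M ^ (n + 1) * (p - u) ^ n / (n.factorial : ℝ) ^ 2 with hEdef
        have hinner : ∀ q ∈ Icc v t', |g (p, q) * F (p, q)| ≤ E * (q - v) ^ n := by
          intro q hq
          have hqmem : q ∈ Icc v v' := ⟨hq.1, hq.2.trans ht'.2⟩
          have hb : 0 ≤ C * M ^ n * (p - u) ^ n * (q - v) ^ n / (n.factorial : ℝ) ^ 2 := by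
            apply div_nonneg _ (by positivity)
            exact mul_nonneg (mul_nonneg (mul_nonneg hC0 (pow_nonneg hM0 n))
              (pow_nonneg (sub_nonneg.2 hpmem.1) n)) (pow_nonneg (sub_nonneg.2 hqmem.1) n)
          calc |g (p, q) * F (p, q)| = |g (p, q)| * |F (p, q)| := abs_mul _ _
            _ ≤ (C * M ^ n * (p - u) ^ n * (q - v) ^ n / (n.factorial : ℝ) ^ 2) * M :=
                mul_le_mul (ih p hpmem q hqmem) (hMF _) (abs_nonneg _) hb
            _ = E * (q - v) ^ n := by rw [hEdef]; ring
        calc |∫ q in v..t', g (p, q) * F (p, q)|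
            ≤ ∫ q in v..t', |g (p, q) * F (p, q)| :=
              intervalIntegral.abs_integral_le_integral_abs ht'.1
          _ ≤ ∫ q in v..t', E * (q - v) ^ n := by
              apply intervalIntegral.integral_mono_on ht'.1 _ _ hinner
              · exact (((hgcont.mul hFcont).comp (Continuous.prodMk_right p)).abs).intervalIntegrable v t'
              · exact (continuous_const.mul ((continuous_id.sub continuous_const).pow n)).intervalIntegrable v t'
          _ = E * ((t' - v) ^ (n + 1) / ((n : ℝ) + 1)) := by
              rw [intervalIntegral.integral_const_mul, hpow v t' n]
          _ = D * (p - u) ^ n := by rw [hEdef, hDdef]; field_simp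
      calc |g (s', t')| = |∫ p in u..s', ∫ q in v..t', g (p, q) * F (p, q)| := by
            rw [heq s' hs' t' ht']
        _ ≤ ∫ p in u..s', |∫ q in v..t', g (p, q) * F (p, q)| :=
            intervalIntegral.abs_integral_le_integral_abs hs'.1
        _ ≤ ∫ p in u..s', D * (p - u) ^ n := by
            apply intervalIntegral.integral_mono_on hs'.1 _ _ hptwise
            · exact ((hGcont t').abs).intervalIntegrable u s'
            · exact (continuous_const.mul ((continuous_id.sub continuous_const).pow n)).intervalIntegrable u s'
        _ = D * ((s' - u) ^ (n + 1) / ((n : ℝ) + 1)) := by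
            rw [intervalIntegral.integral_const_mul, hpow u s' n]
        _ = C * M ^ (n + 1) * (s' - u) ^ (n + 1) * (t' - v) ^ (n + 1)
              / ((n + 1).factorial : ℝ) ^ 2 := by
            rw [hDdef, Nat.factorial_succ]
            push_cast
            field_simp
  -- pass to the limit
  set X : ℝ := M * (s - u) * (t - v) with hXdef
  have hX0 : 0 ≤ X := mul_nonneg (mul_nonneg hM0 (sub_nonneg.2 hs.1)) (sub_nonneg.2 ht.1)
  have hbound : ∀ n : ℕ, |g (s, t)| ≤ C * (X ^ n / (n.factorial : ℝ)) := by
    intro n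
    refine (key n s hs t ht).trans ?_
    have h1 : C * M ^ n * (s - u) ^ n * (t - v) ^ n = C * X ^ n := by
      simp only [hXdef, mul_pow]; ring
    rw [h1, mul_div_assoc]
    apply mul_le_mul_of_nonneg_left _ hC0
    apply div_le_div_of_nonneg_left (pow_nonneg hX0 n) (by positivity)
    calc (n.factorial : ℝ) = n.factorial * 1 := (mul_one _).symm
      _ ≤ (n.factorial : ℝ) * n.factorial := by
          apply mul_le_mul_of_nonneg_left _ (by positivity)
          exact_mod_cast n.factorial_pos
      _ = (n.factorial : ℝ) ^ 2 := (sq (n.factorial : ℝ)).symm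
  have hlim : Filter.Tendsto (fun n : ℕ => C * (X ^ n / (n.factorial : ℝ)))
      Filter.atTop (nhds 0) := by
    have := (FloorSemiring.tendsto_pow_div_factorial_atTop X).const_mul C
    simpa using this
  have habs : |g (s, t)| ≤ 0 := ge_of_tendsto' hlim hbound
  have hg0 : g (s, t) = 0 := abs_nonpos_iff.mp habs
  have : k₁ s t - k₂ s t = 0 := by
    rw [← hg0]; simp only [hgdef, hPeq s hs, hQeq t ht]
  linarith
end
end

section
/- Let f : [u,u']×[v,v'] → ℝ be continuous with sup|f| ≤ M. Then there exists a continuous function k on the rectangle satisfying k(s,t) = 1 + ∫_u^s ∫_v^t k(p,q) f(p,q) dq dp, and it satisfies the bound |k(s,t)| ≤ Σ_{n≥0} M^n (s−u)^n (t−v)^n / (n!)² for all (s,t). -/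
open MeasureTheory Set

noncomputable section

open Function

/-!
Extending `f` by clamping to the rectangle, we may take it continuous and bounded by `M` on the
whole plane. The solution is the Neumann series `k = ∑ kₙ` with `k₀ = 1` and
`kₙ₊₁(s, t) = ∫ᵤˢ ∫ᵥᵗ kₙ f` (the successive differences of the Picard iterates). Integrating
`(p - u)ⁿ (q - v)ⁿ` twice gives `|kₙ(s, t)| ≤ Mⁿ (s - u)ⁿ (t - v)ⁿ / (n!)²`, so the series
converges uniformly on the rectangle, and dominated convergence moves the double integral
through the sum.
-/

lemma abs_intervalIntegral_le_mul_pow {φ : ℝ → ℝ} {a b C : ℝ} (n : ℕ) (hab : a ≤ b)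
    (h : ∀ x ∈ Ioc a b, |φ x| ≤ C * (x - a) ^ n) :
    |∫ x in a..b, φ x| ≤ C * ((b - a) ^ (n + 1) / (n + 1)) := by
  calc |∫ x in a..b, φ x| ≤ ∫ x in a..b, C * (x - a) ^ n :=
        intervalIntegral.norm_integral_le_of_norm_le (f := φ) hab (ae_of_all _ h)
          ((by fun_prop : Continuous fun x => C * (x - a) ^ n).intervalIntegrable _ _)
    _ = C * ((b - a) ^ (n + 1) / (n + 1)) := by
        rw [intervalIntegral.integral_const_mul, intervalIntegral.integral_comp_sub_right
          (· ^ n), sub_self, integral_pow, zero_pow n.succ_ne_zero, sub_zero]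

lemma hasSum_intervalIntegral_intervalIntegral {G : ℕ → ℝ → ℝ → ℝ} {B : ℕ → ℝ} {u s v t : ℝ}
    (hG : ∀ n, Continuous (uncurry (G n)))
    (hGB : ∀ n, ∀ p ∈ uIcc u s, ∀ q ∈ uIcc v t, |G n p q| ≤ B n) (hB : Summable B) :
    HasSum (fun n => ∫ p in u..s, ∫ q in v..t, G n p q)
      (∫ p in u..s, ∫ q in v..t, ∑' n, G n p q) := by
  have hinner : ∀ p ∈ uIcc u s,
      HasSum (fun n => ∫ q in v..t, G n p q) (∫ q in v..t, ∑' n, G n p q) := by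
    intro p hp
    refine intervalIntegral.hasSum_integral_of_dominated_convergence (fun n _ => B n)
      (fun n => (by fun_prop : Continuous (G n p)).aestronglyMeasurable)
      (fun n => ae_of_all _ fun q hq => hGB n p hp q (uIoc_subset_uIcc hq))
      (ae_of_all _ fun _ _ => hB) intervalIntegrable_const
      (ae_of_all _ fun q hq => ?_)
    exact (hB.of_norm_bounded fun n => hGB n p hp q (uIoc_subset_uIcc hq)).hasSum
  refine intervalIntegral.hasSum_integral_of_dominated_convergence (fun n _ => B n * |t - v|)
    (fun n => (by fun_prop : Continuous fun p => ∫ q in v..t, G n p q).aestronglyMeasurable)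
    (fun n => ae_of_all _ fun p hp => ?_) (ae_of_all _ fun _ _ => hB.mul_right _)
    intervalIntegrable_const
    (ae_of_all _ fun p hp => hinner p (uIoc_subset_uIcc hp))
  exact intervalIntegral.norm_integral_le_of_norm_le_const
    fun q hq => hGB n p (uIoc_subset_uIcc hp) q (uIoc_subset_uIcc hq)

lemma exists_continuous_bounded_extension {f : ℝ → ℝ → ℝ} {u u' v v' M : ℝ} (hu : u ≤ u')
    (hv : v ≤ v') (hf : ContinuousOn (fun p : ℝ × ℝ => f p.1 p.2) (Icc u u' ×ˢ Icc v v'))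
    (hM : ∀ s ∈ Icc u u', ∀ t ∈ Icc v v', |f s t| ≤ M) :
    ∃ F : ℝ → ℝ → ℝ, Continuous (uncurry F) ∧ (∀ s t, |F s t| ≤ M) ∧
      ∀ s ∈ Icc u u', ∀ t ∈ Icc v v', F s t = f s t := by
  refine ⟨fun s t => f (projIcc u u' hu s) (projIcc v v' hv t), ?_,
    fun s t => hM _ (projIcc u u' hu s).2 _ (projIcc v v' hv t).2, fun s hs t ht => ?_⟩
  · exact hf.comp_continuous
      (f := fun z : ℝ × ℝ => (↑(projIcc u u' hu z.1), ↑(projIcc v v' hv z.2))) (by fun_prop)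
      fun z => ⟨(projIcc u u' hu z.1).2, (projIcc v v' hv z.2).2⟩
  · simp only [projIcc_of_mem hu hs, projIcc_of_mem hv ht]

namespace Goursat

def majorant (M a b : ℝ) (n : ℕ) : ℝ := M ^ n * a ^ n * b ^ n / (n.factorial : ℝ) ^ 2

lemma summable_majorant (M a b : ℝ) : Summable (majorant M a b) := by
  refine (Real.summable_pow_div_factorial |M * a * b|).of_norm_bounded fun n => ?_
  have hfac : (1 : ℝ) ≤ n.factorial := by exact_mod_cast n.factorial_pos
  rw [majorant, ← mul_pow, ← mul_pow, norm_div, norm_pow, Real.norm_eq_abs, norm_pow,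
    Real.norm_natCast]
  exact div_le_div_of_nonneg_left (by positivity) (by positivity) (by nlinarith)

lemma majorant_mono {M a a' b b' : ℝ} (hM : 0 ≤ M) (ha : 0 ≤ a) (ha' : a ≤ a') (hb : 0 ≤ b)
    (hb' : b ≤ b') (n : ℕ) : majorant M a b n ≤ majorant M a' b' n := by
  unfold majorant
  gcongr
  exact mul_nonneg (pow_nonneg hM n) (pow_nonneg (ha.trans ha') n)

variable (u v : ℝ) (F : ℝ → ℝ → ℝ)

def term : ℕ → ℝ → ℝ → ℝ
  | 0 => fun _ _ => 1
  | n + 1 => fun s t => ∫ p in u..s, ∫ q in v..t, term n p q * F p q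

def solution (s t : ℝ) : ℝ := ∑' n, term u v F n s t

variable {u v F}

lemma continuous_term (hF : Continuous (uncurry F)) (n : ℕ) :
    Continuous (uncurry (term u v F n)) := by
  induction n with
  | zero => exact continuous_const
  | succ n ih =>
    have hG : Continuous (uncurry fun p q => term u v F n p q * F p q) := ih.mul hF
    change Continuous fun z : ℝ × ℝ => ∫ p in u..z.1, ∫ q in v..z.2, term u v F n p q * F p q
    fun_prop

lemma abs_term_le {M : ℝ} (hF : ∀ p q, |F p q| ≤ M) (n : ℕ) {s t : ℝ} (hs : u ≤ s)
    (ht : v ≤ t) :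
    |term u v F n s t| ≤ majorant M (s - u) (t - v) n := by
  induction n generalizing s t with
  | zero => simp [term, majorant]
  | succ n ih =>
    have hfac : ((n + 1).factorial : ℝ) = (n + 1) * n.factorial := by
      rw [Nat.factorial_succ]; push_cast; ring
    have hinner : ∀ p ∈ Ioc u s, |∫ q in v..t, term u v F n p q * F p q| ≤
        M ^ (n + 1) * ((t - v) ^ (n + 1) / (n + 1)) / (n.factorial : ℝ) ^ 2 * (p - u) ^ n := by
      intro p hp
      refine (abs_intervalIntegral_le_mul_pow
        (C := M ^ (n + 1) * (p - u) ^ n / (n.factorial : ℝ) ^ 2) n ht fun q hq => ?_).trans_eq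
        (by ring)
      have hterm := ih hp.1.le hq.1.le
      calc |term u v F n p q * F p q| ≤ majorant M (p - u) (q - v) n * M := by
            rw [abs_mul]
            exact mul_le_mul hterm (hF p q) (abs_nonneg _) ((abs_nonneg _).trans hterm)
        _ = M ^ (n + 1) * (p - u) ^ n / (n.factorial : ℝ) ^ 2 * (q - v) ^ n := by
            unfold majorant; ring
    refine (abs_intervalIntegral_le_mul_pow n hs hinner).trans_eq ?_
    unfold majorant
    rw [hfac]
    field_simp

lemma abs_term_le_of_mem {M u' v' s t : ℝ} (hF : ∀ p q, |F p q| ≤ M) (n : ℕ) (hs : s ∈ Icc u u')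
    (ht : t ∈ Icc v v') : |term u v F n s t| ≤ majorant M (u' - u) (v' - v) n :=
  (abs_term_le hF n hs.1 ht.1).trans <| majorant_mono ((abs_nonneg _).trans (hF u v))
    (sub_nonneg.2 hs.1) (by linarith [hs.2]) (sub_nonneg.2 ht.1) (by linarith [ht.2]) n

lemma continuousOn_solution {M u' v' : ℝ} (hFc : Continuous (uncurry F))
    (hF : ∀ p q, |F p q| ≤ M) :
    ContinuousOn (uncurry (solution u v F)) (Icc u u' ×ˢ Icc v v') :=
  continuousOn_tsum (fun n => (continuous_term hFc n).continuousOn) (summable_majorant _ _ _)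
    fun n _ hz => abs_term_le_of_mem hF n hz.1 hz.2

lemma abs_solution_le {M s t : ℝ} (hF : ∀ p q, |F p q| ≤ M) (hs : u ≤ s) (ht : v ≤ t) :
    |solution u v F s t| ≤ ∑' n, majorant M (s - u) (t - v) n :=
  tsum_of_norm_bounded (f := fun n => term u v F n s t) (summable_majorant _ _ _).hasSum
    fun n => abs_term_le hF n hs ht

lemma solution_eq {M u' v' s t : ℝ} (hFc : Continuous (uncurry F)) (hF : ∀ p q, |F p q| ≤ M)
    (hs : s ∈ Icc u u') (ht : t ∈ Icc v v') :
    solution u v F s t = 1 + ∫ p in u..s, ∫ q in v..t, solution u v F p q * F p q := by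
  have hsucc : HasSum (fun n => term u v F (n + 1) s t)
      (∫ p in u..s, ∫ q in v..t, solution u v F p q * F p q) := by
    have := hasSum_intervalIntegral_intervalIntegral (u := u) (s := s) (v := v) (t := t)
      (G := fun n p q => term u v F n p q * F p q)
      (fun n => (continuous_term hFc n).mul hFc)
      (fun n p hp q hq => ?_) ((summable_majorant M (u' - u) (v' - v)).mul_right M)
    · simp only [tsum_mul_right] at this
      exact this
    have hterm := abs_term_le_of_mem hF n
      (uIcc_subset_Icc (left_mem_Icc.2 (hs.1.trans hs.2)) hs hp)
      (uIcc_subset_Icc (left_mem_Icc.2 (ht.1.trans ht.2)) ht hq)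
    rw [abs_mul]
    exact mul_le_mul hterm (hF p q) (abs_nonneg _) ((abs_nonneg _).trans hterm)
  have hall := (hasSum_nat_add_iff (f := fun n => term u v F n s t) 1).1 hsucc
  rw [Finset.sum_range_one] at hall
  rw [solution, hall.tsum_eq, add_comm]
  rfl

end Goursat

open Goursat in
/-- Existence for the Goursat-type Volterra integral equation with bounded
continuous coefficient, together with the factorial-squared bound. -/
theorem stmt10 (u u' v v' M : ℝ) (hu : u ≤ u') (hv : v ≤ v') (f : ℝ → ℝ → ℝ)
    (hf : ContinuousOn (fun p : ℝ × ℝ => f p.1 p.2) (Icc u u' ×ˢ Icc v v'))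
    (hM : ∀ s ∈ Icc u u', ∀ t ∈ Icc v v', |f s t| ≤ M) :
    ∃ k : ℝ → ℝ → ℝ,
      ContinuousOn (fun p : ℝ × ℝ => k p.1 p.2) (Icc u u' ×ˢ Icc v v') ∧
      (∀ s ∈ Icc u u', ∀ t ∈ Icc v v',
        k s t = 1 + ∫ p in u..s, ∫ q in v..t, k p q * f p q) ∧
      (∀ s ∈ Icc u u', ∀ t ∈ Icc v v',
        |k s t| ≤ ∑' n : ℕ,
          M ^ n * (s - u) ^ n * (t - v) ^ n / ((n.factorial : ℝ)) ^ 2) := by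
  obtain ⟨F, hFc, hFM, hFf⟩ := exists_continuous_bounded_extension hu hv hf hM
  refine ⟨solution u v F, continuousOn_solution hFc hFM, fun s hs t ht => ?_,
    fun s hs t ht => abs_solution_le hFM hs.1 ht.1⟩
  rw [solution_eq hFc hFM hs ht]
  refine congrArg (1 + ·) (intervalIntegral.integral_congr fun p hp => ?_)
  refine intervalIntegral.integral_congr fun q hq => ?_
  rw [hFf p (uIcc_subset_Icc (left_mem_Icc.2 hu) hs hp) q
    (uIcc_subset_Icc (left_mem_Icc.2 hv) ht hq)]
end
end

section
/- Let x : [0,T] → ℝ^d be a C^1 path. Then for any n ≥ 0 and any 0 ≤ s ≤ u ≤ t ≤ T, Chen's identity holds: X_n(s,t) = Σ_{i=0}^n X_i(s,u) ⊗ X_{n−i}(u,t), where X_n(s,t) denotes the n-th iterated integral of x over [s,t]. -/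
open MeasureTheory Set

noncomputable section

/-! Up to the null set of points having a coordinate equal to `m`, the simplex
`s < u₁ < ⋯ < uₙ < t` is the disjoint union over `k ≤ n` of the pieces where exactly the first `k`
coordinates lie below `m`. Concatenation of tuples identifies the `k`-th piece, preserving volume,
with the product of the `k`-simplex over `(s, m)` and the `(n - k)`-simplex over `(m, t)`, and on
it the product integrand factors, so Fubini gives the `k`-th term of Chen's sum. -/

theorem Fin.lt_card_filter_iff_of_antitone {n : ℕ} {P : Fin n → Prop} [DecidablePred P]
    (hP : Antitone P) (i : Fin n) : (i : ℕ) < (Finset.univ.filter P).card ↔ P i := by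
  constructor
  · intro hi
    by_contra hPi
    have hsub : Finset.univ.filter P ⊆ Finset.Iio i := fun j hj => by
      simp only [Finset.mem_filter, Finset.mem_univ, true_and] at hj
      exact Finset.mem_Iio.2 (lt_of_not_ge fun hij => hPi (hP hij hj))
    have := Finset.card_le_card hsub
    rw [Fin.card_Iio] at this
    omega
  · intro hPi
    have hsub : Finset.Iic i ⊆ Finset.univ.filter P := fun j hj => by
      simpa using hP (Finset.mem_Iic.1 hj) hPi
    have := Finset.card_le_card hsub
    rw [Fin.card_Iic] at this
    omega

theorem isOpen_simplex (n : ℕ) (s t : ℝ) : IsOpen (simplex n s t) := by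
  simp only [simplex, ofPred_and, ofPred_forall]
  exact (isOpen_iInter_of_finite fun i => isOpen_Ioo.preimage (continuous_apply i)).inter
    (isOpen_iInter_of_finite fun i => isOpen_iInter_of_finite fun j =>
      isOpen_iInter_of_finite fun _ => isOpen_lt (continuous_apply i) (continuous_apply j))

def splitSimplex (n k : ℕ) (s m t : ℝ) : Set (Fin n → ℝ) :=
  simplex n s t ∩ {u | ∀ i : Fin n, ((i : ℕ) < k → u i < m) ∧ (k ≤ (i : ℕ) → m < u i)}

theorem isOpen_splitSimplex (n k : ℕ) (s m t : ℝ) : IsOpen (splitSimplex n k s m t) := by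
  simp only [splitSimplex, ofPred_forall, ofPred_and]
  exact (isOpen_simplex n s t).inter (isOpen_iInter_of_finite fun i =>
    (isOpen_iInter_of_finite fun _ => isOpen_lt (continuous_apply i) continuous_const).inter
      (isOpen_iInter_of_finite fun _ => isOpen_lt continuous_const (continuous_apply i)))

theorem splitSimplex_subset_simplex (n k : ℕ) (s m t : ℝ) :
    splitSimplex n k s m t ⊆ simplex n s t :=
  inter_subset_left

theorem disjoint_splitSimplex {n k l : ℕ} (hkl : k < l) (hk : k < n) (s m t : ℝ) :
    Disjoint (splitSimplex n k s m t) (splitSimplex n l s m t) := by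
  refine disjoint_left.2 fun u ⟨_, hu⟩ ⟨_, hu'⟩ => ?_
  exact lt_asymm ((hu ⟨k, hk⟩).2 le_rfl) ((hu' ⟨k, hk⟩).1 hkl)

theorem mem_splitSimplex_card_filter_lt {n : ℕ} {s m t : ℝ} {u : Fin n → ℝ}
    (hu : u ∈ simplex n s t) (hm : ∀ i, u i ≠ m) [DecidablePred fun i => u i < m] :
    u ∈ splitSimplex n (Finset.univ.filter fun i => u i < m).card s m t := by
  have hmono : StrictMono u := fun i j h => hu.2 i j h
  have hanti : Antitone fun i => u i < m := fun i j hij hj => (hmono.monotone hij).trans_lt hj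
  refine ⟨hu, fun i => ⟨(Fin.lt_card_filter_iff_of_antitone hanti i).1, fun hi => ?_⟩⟩
  have hge : ¬ u i < m := fun h =>
    Nat.not_lt.2 hi ((Fin.lt_card_filter_iff_of_antitone hanti i).2 h)
  exact lt_of_le_of_ne (not_lt.1 hge) (hm i).symm

theorem simplex_ae_eq_iUnion_splitSimplex (n : ℕ) (s m t : ℝ) :
    simplex n s t =ᵐ[volume] ⋃ k : Fin (n + 1), splitSimplex n k s m t := by
  classical
  have hnull : volume (⋃ i, {u : Fin n → ℝ | u i = m}) = 0 :=
    measure_iUnion_null fun i => Measure.pi_hyperplane (fun _ => (volume : Measure ℝ)) i m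
  refine ae_eq_set.2 ⟨measure_mono_null (fun u ⟨hu, hnot⟩ => ?_) hnull, ?_⟩
  · by_contra hm
    simp only [mem_iUnion, mem_ofPred_eq, not_exists] at hm
    have hk : (Finset.univ.filter fun i => u i < m).card < n + 1 :=
      Nat.lt_succ_of_le ((Finset.card_filter_le _ _).trans_eq (Finset.card_fin n))
    exact hnot (mem_iUnion.2 ⟨⟨_, hk⟩, mem_splitSimplex_card_filter_lt hu hm⟩)
  · rw [sdiff_eq_empty.2 (iUnion_subset fun k : Fin (n + 1) =>
      splitSimplex_subset_simplex n k s m t), measure_empty]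

namespace MeasurableEquiv

def finAppend (α : Type*) [MeasurableSpace α] (a b : ℕ) :
    (Fin a → α) × (Fin b → α) ≃ᵐ (Fin (a + b) → α) :=
  (sumPiEquivProdPi fun _ => α).symm.trans (piCongrLeft (fun _ => α) finSumFinEquiv)

@[simp]
theorem finAppend_apply {α : Type*} [MeasurableSpace α] {a b : ℕ}
    (z : (Fin a → α) × (Fin b → α)) : finAppend α a b z = Fin.append z.1 z.2 := by
  funext i
  refine Fin.addCases (fun p => ?_) (fun q => ?_) i
  · rw [Fin.append_left]
    exact piCongrLeft_apply_apply (β := fun _ => α) finSumFinEquiv _ (Sum.inl p)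
  · rw [Fin.append_right]
    exact piCongrLeft_apply_apply (β := fun _ => α) finSumFinEquiv _ (Sum.inr q)

theorem volume_measurePreserving_finAppend {α : Type*} [MeasureSpace α]
    [SigmaFinite (volume : Measure α)] (a b : ℕ) :
    MeasurePreserving (finAppend α a b) volume volume :=
  (volume_measurePreserving_piCongrLeft (fun _ => α) finSumFinEquiv).comp
    (volume_measurePreserving_sumPiEquivProdPi_symm fun _ => α)

end MeasurableEquiv

theorem finAppend_mem_splitSimplex_iff {a b : ℕ} {s m t : ℝ} (h1 : s ≤ m) (h2 : m ≤ t)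
    (v : Fin a → ℝ) (w : Fin b → ℝ) :
    Fin.append v w ∈ splitSimplex (a + b) a s m t ↔ v ∈ simplex a s m ∧ w ∈ simplex b m t := by
  simp only [splitSimplex, simplex, mem_inter_iff, mem_ofPred_eq, Fin.forall_fin_add,
    Fin.append_left, Fin.append_right, Fin.lt_def, Fin.val_castAdd, Fin.val_natAdd, Fin.is_lt,
    add_lt_add_iff_left, add_lt_iff_neg_left, le_add_iff_nonneg_right, not_le,
    zero_le, not_lt_zero, isEmpty_Prop, IsEmpty.forall_iff, forall_const, and_true, true_and,
    mem_Ioo]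
  constructor
  · rintro ⟨⟨⟨hv, hw⟩, hvv, hww⟩, hvm, hwm⟩
    exact ⟨⟨fun i => ⟨(hv i).1, hvm i⟩, fun i j => (hvv i).1 j⟩,
      fun j => ⟨hwm j, (hw j).2⟩, fun i j => (hww i).2 j⟩
  · rintro ⟨⟨hv, hvv⟩, hw, hww⟩
    refine ⟨⟨⟨fun i => ⟨(hv i).1, (hv i).2.trans_le h2⟩,
        fun j => ⟨h1.trans_lt (hw j).1, (hw j).2⟩⟩,
      fun i => ⟨hvv i, fun j _ => (hv i).2.trans (hw j).1⟩,
      fun j => ⟨fun i h => absurd h (by have := i.is_lt; omega), hww j⟩⟩,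
      fun i => (hv i).2, fun j => (hw j).1⟩

theorem setIntegral_splitSimplex_prod {n : ℕ} (a b : ℕ) (hab : a + b = n) {s m t : ℝ}
    (h1 : s ≤ m) (h2 : m ≤ t) (F : Fin n → ℝ → ℝ) :
    ∫ u in splitSimplex n a s m t, ∏ i, F i (u i)
      = (∫ v in simplex a s m, ∏ p : Fin a, F (Fin.castLE (by omega) p) (v p))
        * ∫ w in simplex b m t, ∏ q : Fin b, F ⟨a + q, by omega⟩ (w q) := by
  subst hab
  have hpre : MeasurableEquiv.finAppend ℝ a b ⁻¹' splitSimplex (a + b) a s m t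
      = simplex a s m ×ˢ simplex b m t := by
    ext ⟨v, w⟩
    simp only [mem_preimage, MeasurableEquiv.finAppend_apply, finAppend_mem_splitSimplex_iff h1 h2,
      mem_prod]
  rw [← (MeasurableEquiv.volume_measurePreserving_finAppend a b).setIntegral_preimage_emb
    (MeasurableEquiv.measurableEmbedding _), hpre]
  simp only [MeasurableEquiv.finAppend_apply, Fin.prod_univ_add, Fin.append_left, Fin.append_right]
  exact setIntegral_prod_mul (fun v : Fin a → ℝ => ∏ p, F (Fin.castAdd b p) (v p))
    (fun w : Fin b → ℝ => ∏ q, F (Fin.natAdd a q) (w q)) _ _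

theorem setIntegral_simplex_prod_eq_sum {n : ℕ} {s m t : ℝ} (h1 : s ≤ m) (h2 : m ≤ t)
    (F : Fin n → ℝ → ℝ)
    (hF : IntegrableOn (fun u : Fin n → ℝ => ∏ i, F i (u i)) (simplex n s t)) :
    ∫ u in simplex n s t, ∏ i, F i (u i)
      = ∑ k : Fin (n + 1),
          (∫ v in simplex k s m,
              ∏ p : Fin k, F (Fin.castLE (Nat.le_of_lt_succ k.isLt) p) (v p))
            * ∫ w in simplex (n - k) m t,
              ∏ q : Fin (n - (k : ℕ)),
                F ⟨(k : ℕ) + q.val, by have := k.isLt; have := q.isLt; omega⟩ (w q) := by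
  have hdisj : Pairwise (Function.onFun Disjoint fun k : Fin (n + 1) => splitSimplex n k s m t) :=
    (pairwise_disjoint_on _).2 fun k l hkl =>
      disjoint_splitSimplex hkl (Nat.lt_of_lt_of_le hkl (Nat.lt_succ_iff.1 l.is_lt)) s m t
  rw [setIntegral_congr_set (simplex_ae_eq_iUnion_splitSimplex n s m t),
    integral_iUnion_fintype (fun k : Fin (n + 1) => (isOpen_splitSimplex n k s m t).measurableSet)
      hdisj fun k => hF.mono_set (splitSimplex_subset_simplex n k s m t)]
  exact Finset.sum_congr rfl fun k _ => setIntegral_splitSimplex_prod k (n - k) (by omega) h1 h2 F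

theorem integrableOn_simplex_prod {n : ℕ} (s t : ℝ) {F : Fin n → ℝ → ℝ}
    (hF : ∀ i, Continuous (F i)) :
    IntegrableOn (fun u : Fin n → ℝ => ∏ i, F i (u i)) (simplex n s t) :=
  (ContinuousOn.integrableOn_compact isCompact_Icc
      (continuous_finsetProd _ fun i _ => (hF i).comp (continuous_apply i)).continuousOn).mono_set
    fun _ hu => ⟨fun i => (hu.1 i).1.le, fun i => (hu.1 i).2.le⟩

/-- Chen's identity: X_n(s,t) = Σ_{i=0}^n X_i(s,m) ⊗ X_{n−i}(m,t), stated
componentwise on the tensor (Fin n → Fin d) → ℝ. -/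
theorem stmt12 (d : ℕ) (x : ℝ → Fin d → ℝ) (hx : ContDiff ℝ 1 x)
    (s m t : ℝ) (h1 : s ≤ m) (h2 : m ≤ t) (n : ℕ) (idx : Fin n → Fin d) :
    iterInt d x n s t idx
      = ∑ i : Fin (n + 1),
          iterInt d x i s m
              (fun p : Fin i => idx (Fin.castLE (Nat.le_of_lt_succ i.isLt) p))
            * iterInt d x (n - i) m t
              (fun q : Fin (n - (i : ℕ)) =>
                idx ⟨(i : ℕ) + q.val, by have := q.isLt; have := i.isLt; omega⟩) := by
  have hF : ∀ i : Fin n, Continuous fun r => deriv x r (idx i) :=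
    fun i => (continuous_apply (idx i)).comp (hx.continuous_deriv le_rfl)
  exact setIntegral_simplex_prod_eq_sum h1 h2 _ (integrableOn_simplex_prod s t hF)
end
end
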